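/- arXiv:1311.3023 — 6 statements merged into one kernel-verified Lean document; each statement's English description precedes it below -/
import Mathlib

section
/- Let A ≻ 0 and B ⪰ 0 be n×n Hermitian matrices with B ≠ 0. Then for a nonnegative real μ, the matrix A − μB is positive semidefinite if and only if μ ≤ μ₊(A,B), where μ₊(A,B) = inf{x^H A x : x^H B x = 1}. -/
open Matrix ComplexOrder

noncomputable def quadForm {n : ℕ} (A : Matrix (Fin n) (Fin n) ℂ) (x : Fin n → ℂ) : ℝ :=
  (star x ⬝ᵥ A.mulVec x).re

noncomputable def muPlus {n : ℕ} (A B : Matrix (Fin n) (Fin n) ℂ) : ℝ :=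
  sInf {r : ℝ | ∃ x : Fin n → ℂ, quadForm B x = 1 ∧ quadForm A x = r}

/-! Both sides say that `μ * xᴴBx ≤ xᴴAx` for every `x`: the left side because `A - μB` is
Hermitian, the right side after rescaling each `x` with `xᴴBx > 0` onto the constraint set
`xᴴBx = 1`, while `A ⪰ 0` covers the vectors with `xᴴBx = 0`. Since `B ≠ 0` makes the constraint
set nonempty (and `A ⪰ 0` bounds it below), `muPlus` is a genuine infimum rather than the junk
value `sInf ∅ = 0`. -/

variable {n : ℕ} {A B M : Matrix (Fin n) (Fin n) ℂ}

theorem quadForm_ofReal_smul (M : Matrix (Fin n) (Fin n) ℂ) (r : ℝ) (x : Fin n → ℂ) :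
    quadForm M ((r : ℂ) • x) = r ^ 2 * quadForm M x := by
  simp only [quadForm, star_smul, mulVec_smul, smul_dotProduct, dotProduct_smul, smul_eq_mul,
    Complex.star_def, Complex.conj_ofReal, Complex.re_ofReal_mul]
  ring

theorem quadForm_sub_ofReal_smul (A B : Matrix (Fin n) (Fin n) ℂ) (μ : ℝ) (x : Fin n → ℂ) :
    quadForm (A - (μ : ℂ) • B) x = quadForm A x - μ * quadForm B x := by
  simp only [quadForm, sub_mulVec, smul_mulVec, dotProduct_sub, dotProduct_smul, smul_eq_mul,
    Complex.sub_re, Complex.re_ofReal_mul]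

namespace Matrix

theorem IsHermitian.ofReal_quadForm (hM : M.IsHermitian) (x : Fin n → ℂ) :
    (quadForm M x : ℂ) = star x ⬝ᵥ M *ᵥ x :=
  Complex.ext rfl (by simpa using (hM.im_star_dotProduct_mulVec_self x).symm)

theorem IsHermitian.posSemidef_iff_quadForm_nonneg (hM : M.IsHermitian) :
    M.PosSemidef ↔ ∀ x, 0 ≤ quadForm M x := by
  simp only [posSemidef_iff_dotProduct_mulVec, hM, true_and, ← hM.ofReal_quadForm,
    Complex.zero_le_real]

theorem PosSemidef.quadForm_nonneg (hM : M.PosSemidef) (x : Fin n → ℂ) : 0 ≤ quadForm M x :=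
  hM.isHermitian.posSemidef_iff_quadForm_nonneg.mp hM x

theorem PosSemidef.exists_quadForm_pos (hM : M.PosSemidef) (hM0 : M ≠ 0) :
    ∃ x, 0 < quadForm M x := by
  obtain ⟨x, hx⟩ : ∃ x, M *ᵥ x ≠ 0 := by
    by_contra! h
    exact hM0 (ext_iff_mulVec.mpr fun x ↦ by simp [h x])
  refine ⟨x, (hM.quadForm_nonneg x).lt_of_ne fun h ↦ hx ?_⟩
  rw [← hM.dotProduct_mulVec_zero_iff, ← hM.isHermitian.ofReal_quadForm, ← h, Complex.ofReal_zero]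

end Matrix

theorem exists_quadForm_eq_one_of_pos {x : Fin n → ℂ} (hx : 0 < quadForm B x) :
    ∃ y, quadForm B y = 1 ∧ quadForm A x = quadForm B x * quadForm A y := by
  have hsq : √(quadForm B x) ^ 2 = quadForm B x := Real.sq_sqrt hx.le
  refine ⟨(((√(quadForm B x))⁻¹ : ℝ) : ℂ) • x, ?_, ?_⟩ <;>
    simp only [quadForm_ofReal_smul, inv_pow, hsq]
  · exact inv_mul_cancel₀ hx.ne'
  · rw [mul_inv_cancel_left₀ hx.ne']

theorem posSemidef_sub_ofReal_smul_iff (hA : A.IsHermitian) (hB : B.IsHermitian) (μ : ℝ) :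
    (A - (μ : ℂ) • B).PosSemidef ↔ ∀ x, μ * quadForm B x ≤ quadForm A x := by
  have hμB : ((μ : ℂ) • B).IsHermitian := hB.smul (Complex.conj_ofReal μ)
  simp only [(hA.sub hμB).posSemidef_iff_quadForm_nonneg, quadForm_sub_ofReal_smul, sub_nonneg]

theorem forall_mul_quadForm_le_iff (hA : A.PosSemidef) (hB : B.PosSemidef) (μ : ℝ) :
    (∀ x, μ * quadForm B x ≤ quadForm A x) ↔ ∀ x, quadForm B x = 1 → μ ≤ quadForm A x := by
  refine ⟨fun h x hx ↦ by simpa [hx] using h x, fun h x ↦ ?_⟩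
  rcases (hB.quadForm_nonneg x).eq_or_lt with hx | hx
  · simpa [← hx] using hA.quadForm_nonneg x
  · obtain ⟨y, hy, hxy⟩ := exists_quadForm_eq_one_of_pos (A := A) hx
    rw [hxy, mul_comm μ]
    exact mul_le_mul_of_nonneg_left (h y hy) hx.le

theorem le_muPlus_iff (hA : A.PosSemidef) (hB : B.PosSemidef) (hB0 : B ≠ 0) (μ : ℝ) :
    μ ≤ muPlus A B ↔ ∀ x, quadForm B x = 1 → μ ≤ quadForm A x := by
  have hne : {r | ∃ x, quadForm B x = 1 ∧ quadForm A x = r}.Nonempty := by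
    obtain ⟨x, hx⟩ := hB.exists_quadForm_pos hB0
    obtain ⟨y, hy, -⟩ := exists_quadForm_eq_one_of_pos (A := A) hx
    exact ⟨_, y, hy, rfl⟩
  have hbdd : BddBelow {r | ∃ x, quadForm B x = 1 ∧ quadForm A x = r} :=
    ⟨0, by rintro _ ⟨x, -, rfl⟩; exact hA.quadForm_nonneg x⟩
  simp only [muPlus, le_csInf_iff hbdd hne]
  exact ⟨fun h x hx ↦ h _ ⟨x, hx, rfl⟩, by rintro h _ ⟨x, hx, rfl⟩; exact h x hx⟩

theorem stmt3_general {n : ℕ} (A B : Matrix (Fin n) (Fin n) ℂ)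
    (hA : A.PosDef) (hB : B.PosSemidef) (hB0 : B ≠ 0)
    (μ : ℝ) :
    (A - (μ : ℂ) • B).PosSemidef ↔ μ ≤ muPlus A B := by
  rw [posSemidef_sub_ofReal_smul_iff hA.isHermitian hB.isHermitian,
    forall_mul_quadForm_le_iff hA.posSemidef hB, le_muPlus_iff hA.posSemidef hB hB0]

theorem stmt3 {n : ℕ} (A B : Matrix (Fin n) (Fin n) ℂ)
    (hA : A.PosDef) (hB : B.PosSemidef) (hB0 : B ≠ 0)
    (μ : ℝ) (hμ0 : 0 ≤ μ) :
    (A - (μ : ℂ) • B).PosSemidef ↔ μ ≤ muPlus A B :=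
  stmt3_general A B hA hB hB0 μ
end

section
/- Let A and B be n×n Hermitian matrices and ε > 0. Denote by λ_k(M) the k-th eigenvalue (in decreasing order) of a Hermitian matrix M. Then Σ_k (λ_k(A − εB) − λ_k(A))² ≤ ε²‖B‖_F², where ‖·‖_F is the Frobenius norm. In particular, each eigenvalue λ_k(A − εB) converges to λ_k(A) as ε → 0. -/
open Matrix ComplexOrder

/-- The eigenvalues of a Hermitian matrix listed in decreasing order:
`eigDesc hM 0` is the largest eigenvalue. -/
noncomputable def eigDesc {n : ℕ} {M : Matrix (Fin n) (Fin n) ℂ} (hM : M.IsHermitian) :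
    Fin n → ℝ :=
  fun k => (hM.eigenvalues ∘ Tuple.sort hM.eigenvalues) k.rev

/-! Diagonalize `M = U diag(λ) U*` and `N = V diag(μ) V*`. For the unitary `W = V* U` the entries
of `V* (N - M) U` are `(μ i - λ j) W i j`, so by unitary invariance of the Frobenius norm
`‖N - M‖² = ∑ i j, |W i j|² (μ i - λ j)²`. The matrix `(|W i j|²)` is doubly stochastic, hence by
Birkhoff a convex combination of permutation matrices, and by the rearrangement inequality every
permutation pairs the eigenvalues worse than matching them in sorted order. The bound on each
eigenvalue, `|λ_k(A - εB) - λ_k(A)| ≤ |ε| ‖B‖`, then gives continuity. -/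

section DoublyStochastic

variable {ι : Type*} [Fintype ι] [DecidableEq ι] {f g : ι → ℝ} {S : Matrix ι ι ℝ}

theorem Monovary.dotProduct_mulVec_le_of_mem_doublyStochastic (hfg : Monovary f g)
    (hS : S ∈ doublyStochastic ℝ ι) : f ⬝ᵥ (S *ᵥ g) ≤ f ⬝ᵥ g := by
  obtain ⟨w, hw0, hw1, rfl⟩ := exists_eq_sum_perm_of_mem_doublyStochastic hS
  calc f ⬝ᵥ ((∑ σ, w σ • σ.permMatrix ℝ) *ᵥ g) = ∑ σ, w σ * (f ⬝ᵥ (g ∘ σ)) := by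
        simp [sum_mulVec, smul_mulVec, permMatrix_mulVec, dotProduct_sum, dotProduct_smul]
    _ ≤ ∑ σ, w σ * (f ⬝ᵥ g) := by
        gcongr with σ
        · exact hw0 σ
        · exact hfg.sum_smul_comp_perm_le_sum_smul
    _ = f ⬝ᵥ g := by rw [← Finset.sum_mul, hw1, one_mul]

theorem Monovary.sum_sub_sq_le_of_mem_doublyStochastic (hfg : Monovary f g)
    (hS : S ∈ doublyStochastic ℝ ι) :
    ∑ i, (f i - g i) ^ 2 ≤ ∑ i, ∑ j, S i j * (f i - g j) ^ 2 := by
  have expand : ∑ i, ∑ j, S i j * (f i - g j) ^ 2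
      = ∑ i, f i ^ 2 + ∑ j, g j ^ 2 - 2 * f ⬝ᵥ (S *ᵥ g) := by
    have rows : ∑ i, ∑ j, S i j * f i ^ 2 = ∑ i, f i ^ 2 := by
      simp [← Finset.sum_mul, sum_row_of_mem_doublyStochastic hS]
    have cols : ∑ i, ∑ j, S i j * g j ^ 2 = ∑ j, g j ^ 2 := by
      rw [Finset.sum_comm]
      simp [← Finset.sum_mul, sum_col_of_mem_doublyStochastic hS]
    simp only [dotProduct, mulVec, Finset.mul_sum, ← rows, ← cols, ← Finset.sum_add_distrib,
      ← Finset.sum_sub_distrib]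
    exact Finset.sum_congr rfl fun i _ => Finset.sum_congr rfl fun j _ => by ring
  have diag : ∑ i, (f i - g i) ^ 2 = ∑ i, f i ^ 2 + ∑ i, g i ^ 2 - 2 * f ⬝ᵥ g := by
    simp only [dotProduct, Finset.mul_sum, ← Finset.sum_add_distrib, ← Finset.sum_sub_distrib]
    exact Finset.sum_congr rfl fun i _ => by ring
  linarith [hfg.dotProduct_mulVec_le_of_mem_doublyStochastic hS]

theorem sum_sub_sq_comp_perm_le_of_mem_doublyStochastic {σ τ : Equiv.Perm ι}
    (hfg : Monovary (f ∘ σ) (g ∘ τ)) (hS : S ∈ doublyStochastic ℝ ι) :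
    ∑ k, (f (σ k) - g (τ k)) ^ 2 ≤ ∑ i, ∑ j, S i j * (f i - g j) ^ 2 := by
  have hS' : S.submatrix σ τ ∈ doublyStochastic ℝ ι :=
    reindex_mem_doublyStochastic (e₁ := σ.symm) (e₂ := τ.symm) hS
  calc ∑ k, (f (σ k) - g (τ k)) ^ 2
      ≤ ∑ k, ∑ l, S (σ k) (τ l) * (f (σ k) - g (τ l)) ^ 2 :=
        hfg.sum_sub_sq_le_of_mem_doublyStochastic hS'
    _ = ∑ i, ∑ j, S i j * (f i - g j) ^ 2 :=
        (Finset.sum_congr rfl fun k _ => Equiv.sum_comp τ _).trans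
          (Equiv.sum_comp σ fun i => ∑ j, S i j * (f i - g j) ^ 2)

end DoublyStochastic

section Unitary

variable {𝕜 : Type*} [RCLike 𝕜] {m n : Type*} [Fintype m]

theorem Matrix.re_conjTranspose_mul_self_apply_self (Y : Matrix m n 𝕜) (j : n) :
    RCLike.re ((Yᴴ * Y) j j) = ∑ i, ‖Y i j‖ ^ 2 := by
  simp only [mul_apply, conjTranspose_apply, map_sum, RCLike.star_def, RCLike.conj_mul]
  norm_cast

theorem Matrix.sum_sum_norm_sq_eq_re_trace [Fintype n] (Y : Matrix m n 𝕜) :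
    ∑ i, ∑ j, ‖Y i j‖ ^ 2 = RCLike.re (Yᴴ * Y).trace := by
  simp only [trace, diag, map_sum, re_conjTranspose_mul_self_apply_self]
  exact Finset.sum_comm

theorem Matrix.sum_sum_norm_sq_unitary_mul_mul_unitary [Fintype n] [DecidableEq m] [DecidableEq n]
    {U : Matrix m m 𝕜} {V : Matrix n n 𝕜} (hU : U ∈ unitaryGroup m 𝕜)
    (hV : V ∈ unitaryGroup n 𝕜) (Y : Matrix m n 𝕜) :
    ∑ i, ∑ j, ‖(U * Y * V) i j‖ ^ 2 = ∑ i, ∑ j, ‖Y i j‖ ^ 2 := by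
  have hUU : Uᴴ * U = 1 := Unitary.star_mul_self_of_mem hU
  have hVV : V * Vᴴ = 1 := Unitary.mul_star_self_of_mem hV
  have : (U * Y * V)ᴴ * (U * Y * V) = Vᴴ * (Yᴴ * Y * V) := by
    simp only [conjTranspose_mul, Matrix.mul_assoc]
    rw [← Matrix.mul_assoc Uᴴ, hUU, Matrix.one_mul]
  rw [sum_sum_norm_sq_eq_re_trace, sum_sum_norm_sq_eq_re_trace, this, trace_mul_comm,
    Matrix.mul_assoc, hVV, Matrix.mul_one]

theorem Matrix.of_norm_sq_mem_doublyStochastic [DecidableEq m] {W : Matrix m m 𝕜}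
    (hW : W ∈ unitaryGroup m 𝕜) : (of fun i j => ‖W i j‖ ^ 2) ∈ doublyStochastic ℝ m := by
  refine mem_doublyStochastic_iff_sum.2 ⟨fun _ _ => sq_nonneg _, fun i => ?_, fun j => ?_⟩
  · have := re_conjTranspose_mul_self_apply_self Wᴴ i
    simp_all [conjTranspose_apply, ← star_eq_conjTranspose, Unitary.mul_star_self_of_mem hW]
  · have := re_conjTranspose_mul_self_apply_self W j
    simp_all [← star_eq_conjTranspose, Unitary.star_mul_self_of_mem hW]

end Unitary

section Hermitian

variable {𝕜 : Type*} [RCLike 𝕜] {n : Type*} [Fintype n] [DecidableEq n]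
  {M N : Matrix n n 𝕜}

theorem Matrix.IsHermitian.star_eigenvectorUnitary_mul_mul_eigenvectorUnitary
    (hM : M.IsHermitian) :
    star (hM.eigenvectorUnitary : Matrix n n 𝕜) * M * (hM.eigenvectorUnitary : Matrix n n 𝕜)
      = diagonal (RCLike.ofReal ∘ hM.eigenvalues) := by
  simpa [Unitary.conjStarAlgAut_star_apply] using hM.conjStarAlgAut_star_eigenvectorUnitary

theorem Matrix.IsHermitian.star_eigenvectorUnitary_mul_sub_mul_eigenvectorUnitary_apply
    (hM : M.IsHermitian) (hN : N.IsHermitian) (i j : n) :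
    (star (hN.eigenvectorUnitary : Matrix n n 𝕜) * (N - M)
        * (hM.eigenvectorUnitary : Matrix n n 𝕜)) i j
      = ((hN.eigenvalues i - hM.eigenvalues j : ℝ) : 𝕜)
        * (star (hN.eigenvectorUnitary : Matrix n n 𝕜)
          * (hM.eigenvectorUnitary : Matrix n n 𝕜)) i j := by
  set U : Matrix n n 𝕜 := ↑hM.eigenvectorUnitary
  set V : Matrix n n 𝕜 := ↑hN.eigenvectorUnitary
  have hU : U * star U = 1 := Unitary.mul_star_self_of_mem hM.eigenvectorUnitary.2
  have hV : V * star V = 1 := Unitary.mul_star_self_of_mem hN.eigenvectorUnitary.2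
  have conj_sub : star V * (N - M) * U
      = (star V * N * V) * (star V * U) - (star V * U) * (star U * M * U) := by
    rw [show (star V * N * V) * (star V * U) - (star V * U) * (star U * M * U)
      = star V * N * (V * star V) * U - star V * (U * star U) * M * U by noncomm_ring, hU, hV]
    noncomm_ring
  rw [conj_sub, hN.star_eigenvectorUnitary_mul_mul_eigenvectorUnitary,
    hM.star_eigenvectorUnitary_mul_mul_eigenvectorUnitary, sub_apply, diagonal_mul,
    mul_diagonal]
  simp only [Function.comp_apply, RCLike.ofReal_sub]
  ring

theorem Matrix.IsHermitian.sum_sq_eigenvalues_comp_perm_sub_le (hM : M.IsHermitian)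
    (hN : N.IsHermitian) {σ τ : Equiv.Perm n}
    (hστ : Monovary (hN.eigenvalues ∘ σ) (hM.eigenvalues ∘ τ)) :
    ∑ k, (hN.eigenvalues (σ k) - hM.eigenvalues (τ k)) ^ 2 ≤ ∑ i, ∑ j, ‖(N - M) i j‖ ^ 2 := by
  set U := hM.eigenvectorUnitary
  set V := hN.eigenvectorUnitary
  set W : Matrix n n 𝕜 := ↑(star V * U)
  calc ∑ k, (hN.eigenvalues (σ k) - hM.eigenvalues (τ k)) ^ 2
      ≤ ∑ i, ∑ j, (of fun i j => ‖W i j‖ ^ 2) i j * (hN.eigenvalues i - hM.eigenvalues j) ^ 2 :=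
        sum_sub_sq_comp_perm_le_of_mem_doublyStochastic hστ
          (of_norm_sq_mem_doublyStochastic (star V * U).2)
    _ = ∑ i, ∑ j, ‖((star V : Matrix n n 𝕜) * (N - M) * U) i j‖ ^ 2 := by
        simp only [hM.star_eigenvectorUnitary_mul_sub_mul_eigenvectorUnitary_apply hN, norm_mul,
          mul_pow, RCLike.norm_ofReal, sq_abs, of_apply, mul_comm, W, U, V, Unitary.coe_star,
          Submonoid.coe_mul]
    _ = ∑ i, ∑ j, ‖(N - M) i j‖ ^ 2 :=
        sum_sum_norm_sq_unitary_mul_mul_unitary (star V).2 U.2 _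

end Hermitian

section Descending

variable {n : ℕ} {M N : Matrix (Fin n) (Fin n) ℂ}

theorem eigDesc_antitone (hM : M.IsHermitian) : Antitone (eigDesc hM) :=
  fun _ _ hkl => Tuple.monotone_sort hM.eigenvalues (Fin.rev_le_rev.mpr hkl)

theorem sum_sq_eigDesc_sub_le (hM : M.IsHermitian) (hN : N.IsHermitian) :
    ∑ k, (eigDesc hN k - eigDesc hM k) ^ 2 ≤ ∑ i, ∑ j, ‖(N - M) i j‖ ^ 2 :=
  hM.sum_sq_eigenvalues_comp_perm_sub_le hN (σ := Fin.revPerm.trans (Tuple.sort _))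
    (τ := Fin.revPerm.trans (Tuple.sort _))
    ((eigDesc_antitone hN).monovary (eigDesc_antitone hM))

theorem abs_eigDesc_sub_le (hM : M.IsHermitian) (hN : N.IsHermitian) (k : Fin n) :
    |eigDesc hN k - eigDesc hM k| ≤ √(∑ i, ∑ j, ‖(N - M) i j‖ ^ 2) :=
  Real.abs_le_sqrt <| (Finset.single_le_sum (fun l _ => sq_nonneg (eigDesc hN l - eigDesc hM l))
    (Finset.mem_univ k)).trans (sum_sq_eigDesc_sub_le hM hN)

end Descending

theorem stmt7_general {n : ℕ} (A B : Matrix (Fin n) (Fin n) ℂ)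
    (hA : A.IsHermitian)
    (hfam : ∀ ε : ℝ, (A - (ε : ℂ) • B).IsHermitian) :
    (∀ ε : ℝ, 0 < ε →
      ∑ k, (eigDesc (hfam ε) k - eigDesc hA k) ^ 2 ≤ ε ^ 2 * ∑ i, ∑ j, ‖B i j‖ ^ 2) ∧
    (∀ k, Filter.Tendsto (fun ε : ℝ => eigDesc (hfam ε) k) (nhds 0) (nhds (eigDesc hA k))) := by
  have perturbation (ε : ℝ) :
      ∑ i, ∑ j, ‖(A - (ε : ℂ) • B - A) i j‖ ^ 2 = ε ^ 2 * ∑ i, ∑ j, ‖B i j‖ ^ 2 := by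
    simp [Finset.mul_sum, mul_pow]
  refine ⟨fun ε _ => (sum_sq_eigDesc_sub_le hA (hfam ε)).trans_eq (perturbation ε), fun k => ?_⟩
  have bound (ε : ℝ) :
      ‖eigDesc (hfam ε) k - eigDesc hA k‖ ≤ |ε| * √(∑ i, ∑ j, ‖B i j‖ ^ 2) := by
    rw [Real.norm_eq_abs, ← Real.sqrt_sq_eq_abs ε, ← Real.sqrt_mul (sq_nonneg ε), ← perturbation]
    exact abs_eigDesc_sub_le hA (hfam ε) k
  have bound_tendsto :
      Filter.Tendsto (fun ε : ℝ => |ε| * √(∑ i, ∑ j, ‖B i j‖ ^ 2)) (nhds 0) (nhds 0) := by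
    simpa using (continuous_abs.tendsto (0 : ℝ)).mul_const (√(∑ i, ∑ j, ‖B i j‖ ^ 2))
  exact tendsto_iff_norm_sub_tendsto_zero.2
    (squeeze_zero (fun _ => norm_nonneg _) bound bound_tendsto)

theorem stmt7 {n : ℕ} (A B : Matrix (Fin n) (Fin n) ℂ)
    (hA : A.IsHermitian) (hB : B.IsHermitian)
    (hfam : ∀ ε : ℝ, (A - (ε : ℂ) • B).IsHermitian) :
    (∀ ε : ℝ, 0 < ε →
      ∑ k, (eigDesc (hfam ε) k - eigDesc hA k) ^ 2 ≤ ε ^ 2 * ∑ i, ∑ j, ‖B i j‖ ^ 2) ∧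
    (∀ k, Filter.Tendsto (fun ε : ℝ => eigDesc (hfam ε) k) (nhds 0) (nhds (eigDesc hA k))) :=
  stmt7_general A B hA hfam
end

section
/- Let G be an entrywise nonnegative n×n real matrix and Γ a diagonal matrix with positive diagonal entries. The system (I − ΓG)p ≥ η has a solution p ≥ 0 for every vector η ≥ 0 if and only if the spectral radius of ΓG is strictly less than 1. -/
/-! If `p ≥ 0` satisfies `(I - A) p ≥ 1` for `A = ΓG ≥ 0`, then `A p < p` with `p > 0`, and
comparing an eigenvector `x` with `p` at an index maximising `|xᵢ| / pᵢ` shows that every eigenvalue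
of `A` has modulus `< 1` (the Collatz–Wielandt bound). Conversely, if `ρ(A) < 1`, Gelfand's formula
makes the Neumann series `∑ Aᵏ` converge, its sum `(I - A)⁻¹` is entrywise nonnegative, and
`p = (I - A)⁻¹ η` solves `(I - A) p = η`. -/

open Matrix

/-- The spectral radius of a real square matrix: the supremum of the moduli of its
complex eigenvalues. -/
noncomputable def specRad {n : ℕ} (M : Matrix (Fin n) (Fin n) ℝ) : ℝ :=
  sSup {r : ℝ | ∃ μ : ℂ, μ ∈ spectrum ℂ (M.map (algebraMap ℝ ℂ)) ∧ r = ‖μ‖}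

open Filter

theorem summable_pow_of_spectralRadius_lt_one {𝔸 : Type*} [NormedRing 𝔸] [NormedAlgebra ℂ 𝔸]
    [CompleteSpace 𝔸] {a : 𝔸} (ha : spectralRadius ℂ a < 1) : Summable (a ^ ·) := by
  obtain ⟨r, hρr, hr1⟩ := ENNReal.lt_iff_exists_nnreal_btwn.mp ha
  refine .of_norm_bounded_eventually_nat (g := fun m => (r : ℝ) ^ m)
    (summable_geometric_of_lt_one r.2 (mod_cast hr1)) ?_
  have hgelfand := spectrum.pow_nnnorm_pow_one_div_tendsto_nhds_spectralRadius a
  filter_upwards [hgelfand.eventually_lt_const hρr, eventually_ge_atTop 1] with m hm hm1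
  rw [one_div, ENNReal.rpow_inv_lt_iff (by positivity), ENNReal.rpow_natCast, ← ENNReal.coe_pow,
    ENNReal.coe_lt_coe] at hm
  exact_mod_cast hm.le

namespace Matrix

variable {ι : Type*} [Fintype ι]

theorem exists_mulVec_eq_smul_of_mem_spectrum {K : Type*} [Field K] [DecidableEq ι]
    {M : Matrix ι ι K} {μ : K} (h : μ ∈ spectrum K M) : ∃ x ≠ 0, M *ᵥ x = μ • x := by
  rw [← spectrum_toLin', ← Module.End.hasEigenvalue_iff_mem_spectrum] at h
  obtain ⟨x, hx⟩ := h.exists_hasEigenvector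
  exact ⟨x, hx.2, by simpa using hx.apply_eq_smul⟩

theorem mulVec_apply_nonneg {R : Type*} [Semiring R] [PartialOrder R] [IsOrderedRing R]
    {A : Matrix ι ι R} (hA : ∀ i j, 0 ≤ A i j) {v : ι → R} (hv : ∀ i, 0 ≤ v i) (i : ι) :
    0 ≤ (A *ᵥ v) i :=
  Finset.sum_nonneg fun j _ => mul_nonneg (hA i j) (hv j)

theorem norm_map_ofReal_mulVec_le {A : Matrix ι ι ℝ} (hA : ∀ i j, 0 ≤ A i j) (x : ι → ℂ)
    (i : ι) :
    ‖(A.map (algebraMap ℝ ℂ) *ᵥ x) i‖ ≤ (A *ᵥ fun j => ‖x j‖) i := by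
  simp only [mulVec, dotProduct, map_apply]
  refine (norm_sum_le _ _).trans_eq (Finset.sum_congr rfl fun j _ => ?_)
  rw [norm_mul, Complex.coe_algebraMap, Complex.norm_of_nonneg (hA i j)]

theorem norm_lt_of_mem_spectrum_of_mulVec_lt [DecidableEq ι] {A : Matrix ι ι ℝ}
    (hA : ∀ i j, 0 ≤ A i j) {p : ι → ℝ} (hp : ∀ i, 0 < p i) {r : ℝ} (hAp : ∀ i, (A *ᵥ p) i < r * p i) {μ : ℂ}
    (hμ : μ ∈ spectrum ℂ (A.map (algebraMap ℝ ℂ))) : ‖μ‖ < r := by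
  obtain ⟨x, hx0, hx⟩ := exists_mulVec_eq_smul_of_mem_spectrum hμ
  obtain ⟨j₀, hj₀⟩ := Function.ne_iff.mp hx0
  have : Nonempty ι := ⟨j₀⟩
  obtain ⟨i₀, -, hmax⟩ := Finset.univ.exists_max_image (fun i => ‖x i‖ / p i) Finset.univ_nonempty
  set t := ‖x i₀‖ / p i₀
  have hx_le : ∀ j, ‖x j‖ ≤ t * p j := fun j =>
    (div_le_iff₀ (hp j)).mp (hmax j (Finset.mem_univ j))
  have ht : 0 < t :=
    (div_pos (norm_pos_iff.mpr hj₀) (hp j₀)).trans_le (hmax j₀ (Finset.mem_univ j₀))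
  have hxi₀ : ‖x i₀‖ = t * p i₀ := (div_mul_cancel₀ _ (hp i₀).ne').symm
  have key : ‖μ‖ * ‖x i₀‖ < r * ‖x i₀‖ := calc
    ‖μ‖ * ‖x i₀‖ = ‖(A.map (algebraMap ℝ ℂ) *ᵥ x) i₀‖ := by
      rw [hx, Pi.smul_apply, smul_eq_mul, norm_mul]
    _ ≤ (A *ᵥ fun j => ‖x j‖) i₀ := norm_map_ofReal_mulVec_le hA x i₀
    _ ≤ (A *ᵥ (t • p)) i₀ := by
      simp only [mulVec, dotProduct]
      exact Finset.sum_le_sum fun j _ => mul_le_mul_of_nonneg_left (hx_le j) (hA i₀ j)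
    _ = t * (A *ᵥ p) i₀ := by rw [mulVec_smul, Pi.smul_apply, smul_eq_mul]
    _ < t * (r * p i₀) := mul_lt_mul_of_pos_left (hAp i₀) ht
    _ = r * ‖x i₀‖ := by rw [hxi₀]; ring
  exact lt_of_mul_lt_mul_right key (norm_nonneg _)

theorem exists_nonneg_one_sub_mulVec_eq [DecidableEq ι] {A : Matrix ι ι ℝ}
    (hA : ∀ i j, 0 ≤ A i j) (hsum : Summable (A ^ ·)) {η : ι → ℝ} (hη : ∀ i, 0 ≤ η i) :
    ∃ p : ι → ℝ, (∀ i, 0 ≤ p i) ∧ (1 - A) *ᵥ p = η := by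
  have hS : ∀ i j, 0 ≤ (∑' k, A ^ k) i j := fun i j =>
    (hsum.hasSum.map (entryAddMonoidHom ℝ i j) (continuous_id.matrix_elem i j)).nonneg
      fun k => pow_apply_nonneg hA k i j
  refine ⟨(∑' k, A ^ k) *ᵥ η, mulVec_apply_nonneg hS hη, ?_⟩
  rw [mulVec_mulVec, hsum.one_sub_mul_tsum_pow, one_mulVec]

end Matrix

section specRad

variable {n : ℕ}

theorem specRad_set_finite (M : Matrix (Fin n) (Fin n) ℝ) :
    {r : ℝ | ∃ μ : ℂ, μ ∈ spectrum ℂ (M.map (algebraMap ℝ ℂ)) ∧ r = ‖μ‖}.Finite :=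
  ((Matrix.finite_spectrum _).image (‖·‖)).subset fun _ ⟨μ, hμ, hr⟩ => ⟨μ, hμ, hr.symm⟩

theorem norm_le_specRad {M : Matrix (Fin n) (Fin n) ℝ} {μ : ℂ}
    (hμ : μ ∈ spectrum ℂ (M.map (algebraMap ℝ ℂ))) : ‖μ‖ ≤ specRad M :=
  le_csSup (specRad_set_finite M).bddAbove ⟨μ, hμ, rfl⟩

theorem specRad_lt_of_forall_norm_lt {M : Matrix (Fin n) (Fin n) ℝ} {r : ℝ} (hr : 0 < r)
    (h : ∀ μ ∈ spectrum ℂ (M.map (algebraMap ℝ ℂ)), ‖μ‖ < r) : specRad M < r := by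
  rcases Set.eq_empty_or_nonempty
    {r : ℝ | ∃ μ : ℂ, μ ∈ spectrum ℂ (M.map (algebraMap ℝ ℂ)) ∧ r = ‖μ‖} with hS | hS
  · rwa [specRad, hS, Real.sSup_empty]
  · obtain ⟨μ, hμ, hsup⟩ := hS.csSup_mem (specRad_set_finite M)
    rw [specRad, hsup]
    exact h μ hμ

theorem spectralRadius_map_le_ofReal_specRad (M : Matrix (Fin n) (Fin n) ℝ) :
    spectralRadius ℂ (M.map (algebraMap ℝ ℂ)) ≤ ENNReal.ofReal (specRad M) :=
  iSup₂_le fun μ hμ => by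
    rw [← ENNReal.ofReal_coe_nnreal, coe_nnnorm]
    exact ENNReal.ofReal_le_ofReal (norm_le_specRad hμ)

theorem summable_pow_of_specRad_lt_one {A : Matrix (Fin n) (Fin n) ℝ} (h : specRad A < 1) :
    Summable (A ^ ·) := by
  let B := A.map (algebraMap ℝ ℂ)
  have hB : Summable (B ^ ·) := by
    -- any norm will do; the ℓ∞ operator norm makes the complex matrices a Banach algebra
    let := Matrix.linftyOpNormedRing (n := Fin n) (α := ℂ)
    let := Matrix.linftyOpNormedAlgebra (n := Fin n) (R := ℂ) (α := ℂ)
    have := FiniteDimensional.complete ℂ (Matrix (Fin n) (Fin n) ℂ)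
    exact summable_pow_of_spectralRadius_lt_one
      ((spectralRadius_map_le_ofReal_specRad A).trans_lt (ENNReal.ofReal_lt_one.mpr h))
  have hre : ∀ m : ℕ, A ^ m = (B ^ m).map Complex.re := fun m => by
    rw [show B = (algebraMap ℝ ℂ).mapMatrix A from rfl, ← map_pow, RingHom.mapMatrix_apply,
      Matrix.map_map]
    ext
    simp
  simpa [Function.comp_def, hre] using
    hB.map Complex.reAddGroupHom.mapMatrix (continuous_id.matrix_map Complex.continuous_re)

theorem specRad_lt_one_of_one_le_one_sub_mulVec {A : Matrix (Fin n) (Fin n) ℝ}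
    (hA : ∀ i j, 0 ≤ A i j) {p : Fin n → ℝ} (hp : ∀ i, 0 ≤ p i)
    (hAp : ∀ i, 1 ≤ ((1 - A) *ᵥ p) i) : specRad A < 1 := by
  have hAp' : ∀ i, (A *ᵥ p) i + 1 ≤ p i := fun i => by
    have := hAp i
    rw [sub_mulVec, one_mulVec, Pi.sub_apply] at this
    linarith
  refine specRad_lt_of_forall_norm_lt one_pos fun μ hμ => ?_
  refine Matrix.norm_lt_of_mem_spectrum_of_mulVec_lt hA (p := p) (fun i => ?_) (fun i => ?_) hμ
  · linarith [hAp' i, Matrix.mulVec_apply_nonneg hA hp i]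
  · linarith [hAp' i]

end specRad

theorem stmt11 {n : ℕ} (G : Matrix (Fin n) (Fin n) ℝ) (γ : Fin n → ℝ)
    (hG : ∀ i j, 0 ≤ G i j) (hγ : ∀ i, 0 < γ i) :
    (∀ η : Fin n → ℝ, (∀ i, 0 ≤ η i) →
        ∃ p : Fin n → ℝ, (∀ i, 0 ≤ p i) ∧
          ∀ i, η i ≤ ((1 - Matrix.diagonal γ * G).mulVec p) i) ↔
      specRad (Matrix.diagonal γ * G) < 1 := by
  have hA : ∀ i j, 0 ≤ (diagonal γ * G) i j := fun i j => by
    rw [diagonal_mul]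
    exact mul_nonneg (hγ i).le (hG i j)
  constructor
  · intro h
    obtain ⟨p, hp, hAp⟩ := h 1 fun _ => zero_le_one
    exact specRad_lt_one_of_one_le_one_sub_mulVec hA hp hAp
  · intro h η hη
    obtain ⟨p, hp, hAp⟩ :=
      Matrix.exists_nonneg_one_sub_mulVec_eq hA (summable_pow_of_specRad_lt_one h) hη
    exact ⟨p, hp, fun i => (congrFun hAp i).ge⟩
end

section
/- Let J : ℝ_{≥0}^n → ℝ_{≥0}^n be a standard function: (positivity) J(λ) ≥ 0 for λ ≥ 0; (monotonicity) λ ≥ λ' implies J(λ) ≥ J(λ'); (scalability) αJ(λ) > J(αλ) componentwise for all α > 1. Then J has at most one fixed point in ℝ_{≥0}^n. -/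
/-!
Scalability at `0` gives `J 0 < 2 • J 0`, so `J 0 > 0`, and by monotonicity every fixed point in
the orthant is strictly positive. Given two fixed points `l₁, l₂`, let `α` be the smallest scalar
with `l₁ ≤ α • l₂`, attained at some coordinate `k`. If `α > 1`, then
`l₁ = J l₁ ≤ J (α • l₂) < α • J l₂ = α • l₂` strictly in every coordinate, in particular at `k`,
which is absurd. Hence `l₁ ≤ l₂`, and by symmetry `l₁ = l₂`.
-/

open Function

namespace StandardInterference

variable {ι : Type*} {J : (ι → ℝ) → ι → ℝ}
  (hmono : ∀ l l' : ι → ℝ, 0 ≤ l' → l' ≤ l → J l' ≤ J l)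
  (hscal : ∀ l : ι → ℝ, 0 ≤ l → ∀ α : ℝ, 1 < α → ∀ i, J (α • l) i < α * J l i)
include hmono hscal

theorem apply_pos {l : ι → ℝ} (hl : 0 ≤ l) (i : ι) : 0 < J l i := by
  have hJ0 : J 0 i < 2 * J 0 i := by
    simpa only [smul_zero] using hscal 0 le_rfl 2 one_lt_two i
  have hmono0 : J 0 i ≤ J l i := hmono l 0 le_rfl hl i
  linarith

theorem lt_smul_of_le_smul {l₁ l₂ : ι → ℝ} (h₁ : 0 ≤ l₁) (h₂ : 0 ≤ l₂)
    (hf₁ : IsFixedPt J l₁) (hf₂ : IsFixedPt J l₂) {α : ℝ} (hα : 1 < α) (hle : l₁ ≤ α • l₂)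
    (k : ι) : l₁ k < α * l₂ k :=
  calc l₁ k = J l₁ k := (congrFun hf₁ k).symm
    _ ≤ J (α • l₂) k := hmono (α • l₂) l₁ h₁ hle k
    _ < α * J l₂ k := hscal l₂ h₂ α hα k
    _ = α * l₂ k := by rw [hf₂]

theorem le_of_isFixedPt [Finite ι] {l₁ l₂ : ι → ℝ} (h₁ : 0 ≤ l₁) (h₂ : 0 ≤ l₂)
    (hf₁ : IsFixedPt J l₁) (hf₂ : IsFixedPt J l₂) : l₁ ≤ l₂ := by
  by_contra hnle
  obtain ⟨i, hi⟩ : ∃ i, l₂ i < l₁ i := by simpa [Pi.le_def] using hnle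
  have hpos : ∀ j, 0 < l₂ j := fun j => hf₂ ▸ apply_pos hmono hscal h₂ j
  have : Nonempty ι := ⟨i⟩
  obtain ⟨k, hk⟩ := Finite.exists_max fun j => l₁ j / l₂ j
  have hα : 1 < l₁ k / l₂ k := ((one_lt_div (hpos i)).mpr hi).trans_le (hk i)
  have hle : l₁ ≤ (l₁ k / l₂ k) • l₂ := fun j => (div_le_iff₀ (hpos j)).mp (hk j)
  have hlt := lt_smul_of_le_smul hmono hscal h₁ h₂ hf₁ hf₂ hα hle k
  rw [div_mul_cancel₀ _ (hpos k).ne'] at hlt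
  exact hlt.false

end StandardInterference

theorem stmt12_general {n : ℕ} (J : (Fin n → ℝ) → (Fin n → ℝ))
    (hmono : ∀ l l' : Fin n → ℝ, (∀ i, 0 ≤ l' i) → (∀ i, l' i ≤ l i) →
      ∀ i, J l' i ≤ J l i)
    (hscal : ∀ l : Fin n → ℝ, (∀ i, 0 ≤ l i) → ∀ α : ℝ, 1 < α →
      ∀ i, J (α • l) i < α * J l i) :
    ∀ l₁ l₂ : Fin n → ℝ, (∀ i, 0 ≤ l₁ i) → (∀ i, 0 ≤ l₂ i) →
      J l₁ = l₁ → J l₂ = l₂ → l₁ = l₂ :=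
  fun _ _ h₁ h₂ hf₁ hf₂ => le_antisymm
    (StandardInterference.le_of_isFixedPt hmono hscal h₁ h₂ hf₁ hf₂)
    (StandardInterference.le_of_isFixedPt hmono hscal h₂ h₁ hf₂ hf₁)

theorem stmt12 {n : ℕ} (J : (Fin n → ℝ) → (Fin n → ℝ))
    (hpos : ∀ l : Fin n → ℝ, (∀ i, 0 ≤ l i) → ∀ i, 0 ≤ J l i)
    (hmono : ∀ l l' : Fin n → ℝ, (∀ i, 0 ≤ l' i) → (∀ i, l' i ≤ l i) →
      ∀ i, J l' i ≤ J l i)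
    (hscal : ∀ l : Fin n → ℝ, (∀ i, 0 ≤ l i) → ∀ α : ℝ, 1 < α →
      ∀ i, J (α • l) i < α * J l i) :
    ∀ l₁ l₂ : Fin n → ℝ, (∀ i, 0 ≤ l₁ i) → (∀ i, 0 ≤ l₂ i) →
      J l₁ = l₁ → J l₂ = l₂ → l₁ = l₂ :=
  stmt12_general J hmono hscal
end

section
/- Let J : ℝ_{≥0}^n → ℝ_{≥0}^n be a continuous standard function (positive, monotone, scalable) that has a fixed point λ*. Then the synchronous iteration λ(t+1) = J(λ(t)) converges to λ* from any starting point λ(0) ≥ 0. -/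
/-!
Yates' argument. Scalability at `0` gives `J 0 > 0`, so every nonnegative fixed point is strictly
positive, and comparing two of them through the largest ratio of their coordinates shows that the
fixed point is unique. The iterates from `0` increase and those from `α • λ*` (`α > 1`) decrease;
both are monotone and bounded, so by continuity they converge to a fixed point, i.e. to `λ*`.
Monotonicity of `J` then squeezes the iterates from any `0 ≤ λ(0) ≤ α • λ*` between them.
-/

open Filter Topology Function Set

structure IsStandardFunction {ι : Type*} (J : (ι → ℝ) → ι → ℝ) : Prop where
  nonneg : ∀ l, 0 ≤ l → 0 ≤ J l
  monotoneOn : MonotoneOn J (Ici 0)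
  scalable : ∀ l, 0 ≤ l → ∀ α : ℝ, 1 < α → ∀ i, J (α • l) i < α * J l i

theorem exists_one_lt_le_smul {ι : Type*} [Fintype ι] (x : ι → ℝ) {y : ι → ℝ}
    (hy : ∀ i, 0 < y i) : ∃ α : ℝ, 1 < α ∧ x ≤ α • y := by
  have hterm : ∀ i, 0 ≤ |x i| / y i := fun i => div_nonneg (abs_nonneg _) (hy i).le
  refine ⟨2 + ∑ i, |x i| / y i, ?_, fun i => ?_⟩
  · linarith [Finset.sum_nonneg fun i (_ : i ∈ Finset.univ) => hterm i]
  · have hi : |x i| / y i ≤ ∑ j, |x j| / y j :=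
      Finset.single_le_sum (fun j _ => hterm j) (Finset.mem_univ i)
    calc x i ≤ |x i| := le_abs_self _
      _ = |x i| / y i * y i := (div_mul_cancel₀ _ (hy i).ne').symm
      _ ≤ (2 + ∑ j, |x j| / y j) * y i := mul_le_mul_of_nonneg_right (by linarith) (hy i).le

namespace IsStandardFunction

variable {ι : Type*} {J : (ι → ℝ) → ι → ℝ} (hJ : IsStandardFunction J)
include hJ

theorem zero_lt_apply_zero (i : ι) : 0 < J 0 i := by
  have h := hJ.scalable 0 le_rfl 2 one_lt_two i
  rw [smul_zero] at h
  linarith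

theorem pos_of_isFixedPt {x : ι → ℝ} (hx : 0 ≤ x) (hfix : IsFixedPt J x) (i : ι) : 0 < x i :=
  calc 0 < J 0 i := hJ.zero_lt_apply_zero i
    _ ≤ J x i := hJ.monotoneOn (le_refl (0 : ι → ℝ)) hx hx i
    _ = x i := congrFun hfix i

theorem le_of_isFixedPt [Finite ι] {x y : ι → ℝ} (hx : 0 ≤ x) (hy : 0 ≤ y)
    (hfx : IsFixedPt J x) (hfy : IsFixedPt J y) : y ≤ x := by
  intro i
  by_contra! hlt
  have : Nonempty ι := ⟨i⟩
  have hxpos := hJ.pos_of_isFixedPt hx hfx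
  obtain ⟨j, hj⟩ := Finite.exists_max fun k => y k / x k
  set α := y j / x j
  have hα : 1 < α := ((one_lt_div (hxpos i)).2 hlt).trans_le (hj i)
  have hle : y ≤ α • x := fun k => (div_le_iff₀ (hxpos k)).1 (hj k)
  -- `y ≤ α • x` is tight at `j`, which scalability forbids
  have : y j < y j :=
    calc y j = J y j := (congrFun hfy j).symm
      _ ≤ J (α • x) j := hJ.monotoneOn hy (hy.trans hle) hle j
      _ < α * J x j := hJ.scalable x hx α hα j
      _ = y j := by rw [hfx.eq]; exact div_mul_cancel₀ _ (hxpos j).ne'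
  exact lt_irrefl _ this

theorem eq_of_isFixedPt [Finite ι] {x y : ι → ℝ} (hx : 0 ≤ x) (hy : 0 ≤ y)
    (hfx : IsFixedPt J x) (hfy : IsFixedPt J y) : x = y :=
  le_antisymm (hJ.le_of_isFixedPt hy hx hfy hfx) (hJ.le_of_isFixedPt hx hy hfx hfy)

theorem iterate_nonneg {x : ι → ℝ} (hx : 0 ≤ x) (t : ℕ) : 0 ≤ J^[t] x :=
  (MapsTo.iterate (fun l (hl : 0 ≤ l) => hJ.nonneg l hl) t) hx

theorem iterate_le_iterate {x y : ι → ℝ} (hx : 0 ≤ x) (hxy : x ≤ y) (t : ℕ) :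
    J^[t] x ≤ J^[t] y := by
  induction t with
  | zero => exact hxy
  | succ t ih =>
    simp only [iterate_succ_apply']
    exact hJ.monotoneOn (hJ.iterate_nonneg hx t) (hJ.iterate_nonneg (hx.trans hxy) t) ih

theorem tendsto_iterate_of_le_apply [Finite ι] (hc : Continuous J) {x x' : ι → ℝ}
    (hx : 0 ≤ x) (hxJ : x ≤ J x) (hxx' : x ≤ x') (hfix : IsFixedPt J x') :
    Tendsto (fun t => J^[t] x) atTop (𝓝 x') := by
  have hbdd : BddAbove (range fun t => J^[t] x) := by
    refine ⟨x', forall_mem_range.2 fun t => ?_⟩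
    exact (hJ.iterate_le_iterate hx hxx' t).trans_eq (hfix.iterate t).eq
  have hmono : Monotone fun t => J^[t] x := monotone_nat_of_le_succ fun t => by
    rw [iterate_succ_apply]
    exact hJ.iterate_le_iterate hx hxJ t
  have hlim := tendsto_atTop_ciSup hmono hbdd
  have hlim0 : 0 ≤ ⨆ t, J^[t] x := hx.trans (le_ciSup hbdd 0)
  rwa [hJ.eq_of_isFixedPt hlim0 (hx.trans hxx') (isFixedPt_of_tendsto_iterate hlim hc.continuousAt)
    hfix] at hlim

theorem tendsto_iterate_of_apply_le [Finite ι] (hc : Continuous J) {x x' : ι → ℝ}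
    (hJx : J x ≤ x) (hx'x : x' ≤ x) (hx' : 0 ≤ x') (hfix : IsFixedPt J x') :
    Tendsto (fun t => J^[t] x) atTop (𝓝 x') := by
  have hx : 0 ≤ x := hx'.trans hx'x
  have hbound : ∀ t, x' ≤ J^[t] x := fun t =>
    (hfix.iterate t).eq.symm.trans_le (hJ.iterate_le_iterate hx' hx'x t)
  have hbdd : BddBelow (range fun t => J^[t] x) := ⟨x', forall_mem_range.2 hbound⟩
  have hanti : Antitone fun t => J^[t] x := antitone_nat_of_succ_le fun t => by
    rw [iterate_succ_apply]
    exact hJ.iterate_le_iterate (hJ.nonneg x hx) hJx t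
  have hlim := tendsto_atTop_ciInf hanti hbdd
  have hlim0 : 0 ≤ ⨅ t, J^[t] x := hx'.trans (le_ciInf hbound)
  rwa [hJ.eq_of_isFixedPt hlim0 hx' (isFixedPt_of_tendsto_iterate hlim hc.continuousAt)
    hfix] at hlim

end IsStandardFunction

theorem stmt14 {n : ℕ} (J : (Fin n → ℝ) → (Fin n → ℝ)) (hcont : Continuous J)
    (hpos : ∀ l : Fin n → ℝ, (∀ i, 0 ≤ l i) → ∀ i, 0 ≤ J l i)
    (hmono : ∀ l l' : Fin n → ℝ, (∀ i, 0 ≤ l' i) → (∀ i, l' i ≤ l i) →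
      ∀ i, J l' i ≤ J l i)
    (hscal : ∀ l : Fin n → ℝ, (∀ i, 0 ≤ l i) → ∀ α : ℝ, 1 < α →
      ∀ i, J (α • l) i < α * J l i)
    (lamStar : Fin n → ℝ) (hstar0 : ∀ i, 0 ≤ lamStar i) (hfix : J lamStar = lamStar) :
    ∀ lam0 : Fin n → ℝ, (∀ i, 0 ≤ lam0 i) →
      Filter.Tendsto (fun t : ℕ => J^[t] lam0) Filter.atTop (nhds lamStar) := by
  intro lam0 hlam0
  have hJ : IsStandardFunction J := ⟨hpos, fun x hx y _ hxy => hmono y x hx hxy, hscal⟩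
  obtain ⟨α, hα, hle⟩ := exists_one_lt_le_smul lam0 (hJ.pos_of_isFixedPt hstar0 hfix)
  have hlower := hJ.tendsto_iterate_of_le_apply hcont le_rfl (hJ.nonneg 0 le_rfl) hstar0 hfix
  have hupper := hJ.tendsto_iterate_of_apply_le hcont (x := α • lamStar)
    (fun i => (hJ.scalable _ hstar0 α hα i).le.trans_eq (by rw [hfix]; rfl))
    (fun i => le_mul_of_one_le_left (hstar0 i) hα.le) hstar0 hfix
  rw [tendsto_pi_nhds] at hlower hupper ⊢
  exact fun i => tendsto_of_tendsto_of_tendsto_of_le_of_le (hlower i) (hupper i)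
    (fun t => hJ.iterate_le_iterate le_rfl hlam0 t i) (fun t => hJ.iterate_le_iterate hlam0 hle t i)
end

section
/- Fix Hermitian matrices R_k ⪰ 0 (k = 1,...,n), R ⪰ 0 with R ≠ 0, and γ > 0. Define F(λ) = μ₊( (1 + 1/γ)^{-1}(I + Σ_k λ_k R_k), R ), where μ₊(A,B) = inf{x^H A x : x^H B x = 1}. Then F is scalable: for all α > 1 and λ ≥ 0, α·F(λ) > F(αλ). -/
/-!
Write `A(λ) = c⁻¹ (I + ∑ λₖ Rₖ)` with `c = 1 + 1/γ`. Scaling `λ` by `α > 1` scales everything but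
the identity part: `α A(λ) = A(αλ) + (α - 1) c⁻¹ I`. On the constraint set `xᴴ R x = 1` we have
`1 ≤ ‖R‖ ‖x‖²`, so the objective of `μ₊(A(αλ), R)` lies below `α` times that of `μ₊(A(λ), R)` by
the uniform gap `(α - 1) c⁻¹ / ‖R‖ > 0`, which survives passing to the infima.
-/

open Matrix ComplexOrder

section QuadForm

open scoped Matrix.Norms.L2Operator

variable {n : ℕ}

lemma quadForm_add (A B : Matrix (Fin n) (Fin n) ℂ) (x : Fin n → ℂ) :
    quadForm (A + B) x = quadForm A x + quadForm B x := by
  simp [quadForm, add_mulVec, dotProduct_add]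

lemma quadForm_real_smul (a : ℝ) (A : Matrix (Fin n) (Fin n) ℂ) (x : Fin n → ℂ) :
    quadForm ((a : ℂ) • A) x = a * quadForm A x := by
  simp [quadForm, smul_mulVec, dotProduct_smul]

lemma quadForm_sum {ι : Type*} (s : Finset ι) (A : ι → Matrix (Fin n) (Fin n) ℂ)
    (x : Fin n → ℂ) : quadForm (∑ k ∈ s, A k) x = ∑ k ∈ s, quadForm (A k) x := by
  simp [quadForm, sum_mulVec, dotProduct_sum]

lemma quadForm_smul_vec (A : Matrix (Fin n) (Fin n) ℂ) (t : ℝ) (x : Fin n → ℂ) :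
    quadForm A ((t : ℂ) • x) = t ^ 2 * quadForm A x := by
  simp [quadForm, mulVec_smul, dotProduct_smul, smul_dotProduct, star_smul, sq, mul_assoc]

lemma Matrix.PosSemidef.quadForm_nonneg_s17 {A : Matrix (Fin n) (Fin n) ℂ} (hA : A.PosSemidef)
    (x : Fin n → ℂ) : 0 ≤ quadForm A x :=
  hA.re_dotProduct_nonneg x

lemma quadForm_one_eq_norm_sq (x : Fin n → ℂ) : quadForm 1 x = ‖WithLp.toLp 2 x‖ ^ 2 := by
  rw [← inner_self_eq_norm_sq (𝕜 := ℂ), EuclideanSpace.inner_toLp_toLp, quadForm, one_mulVec,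
    dotProduct_comm]
  rfl

lemma quadForm_le_norm_mul_quadForm_one (A : Matrix (Fin n) (Fin n) ℂ) (x : Fin n → ℂ) :
    quadForm A x ≤ ‖A‖ * quadForm 1 x := by
  have hAx : ‖WithLp.toLp 2 (A *ᵥ x)‖ ≤ ‖A‖ * ‖WithLp.toLp 2 x‖ :=
    A.l2_opNorm_mulVec (WithLp.toLp 2 x)
  calc quadForm A x = RCLike.re (inner ℂ (WithLp.toLp 2 x) (WithLp.toLp 2 (A *ᵥ x))) := by
        rw [EuclideanSpace.inner_toLp_toLp, quadForm, dotProduct_comm]; rfl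
    _ ≤ ‖WithLp.toLp 2 x‖ * ‖WithLp.toLp 2 (A *ᵥ x)‖ := re_inner_le_norm _ _
    _ ≤ ‖WithLp.toLp 2 x‖ * (‖A‖ * ‖WithLp.toLp 2 x‖) := by gcongr
    _ = ‖A‖ * quadForm 1 x := by rw [quadForm_one_eq_norm_sq]; ring

lemma inv_norm_le_quadForm_one {A : Matrix (Fin n) (Fin n) ℂ} {x : Fin n → ℂ}
    (hx : quadForm A x = 1) : ‖A‖⁻¹ ≤ quadForm 1 x := by
  have hle : 1 ≤ ‖A‖ * quadForm 1 x := hx ▸ quadForm_le_norm_mul_quadForm_one A x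
  have hA : 0 < ‖A‖ :=
    pos_of_mul_pos_left (one_pos.trans_le hle) (PosSemidef.one.quadForm_nonneg_s17 x)
  rwa [inv_le_iff_one_le_mul₀' hA]

lemma exists_quadForm_pos {A : Matrix (Fin n) (Fin n) ℂ} (hA : A.PosSemidef) (hA0 : A ≠ 0) :
    ∃ x, 0 < quadForm A x := by
  by_contra! h
  refine hA0 (ext_iff_mulVec.mpr fun x => ?_)
  have hnonneg := Complex.nonneg_iff.mp (hA.dotProduct_mulVec_nonneg x)
  have hzero : star x ⬝ᵥ A *ᵥ x = 0 :=
    Complex.ext (le_antisymm (h x) hnonneg.1) hnonneg.2.symm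
  rw [zero_mulVec]
  exact (hA.dotProduct_mulVec_zero_iff x).mp hzero

lemma exists_quadForm_eq_one {A : Matrix (Fin n) (Fin n) ℂ} {x : Fin n → ℂ}
    (hx : 0 < quadForm A x) : ∃ y, quadForm A y = 1 := by
  refine ⟨(((Real.sqrt (quadForm A x))⁻¹ : ℝ) : ℂ) • x, ?_⟩
  rw [quadForm_smul_vec, inv_pow, Real.sq_sqrt hx.le, inv_mul_cancel₀ hx.ne']

end QuadForm

lemma muPlus_lt_mul_muPlus {n : ℕ} {A A' B : Matrix (Fin n) (Fin n) ℂ} {α ε : ℝ}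
    (hα : 0 < α) (hε : 0 < ε) (hB : ∃ x, quadForm B x = 1) (hA' : ∀ x, 0 ≤ quadForm A' x)
    (h : ∀ x, quadForm B x = 1 → quadForm A' x + ε ≤ α * quadForm A x) :
    muPlus A' B < α * muPlus A B := by
  obtain ⟨x₀, hx₀⟩ := hB
  have hbdd : BddBelow {r | ∃ x, quadForm B x = 1 ∧ quadForm A' x = r} :=
    ⟨0, by rintro _ ⟨x, -, rfl⟩; exact hA' x⟩
  have hle : (muPlus A' B + ε) / α ≤ muPlus A B := by
    refine le_csInf ⟨_, x₀, hx₀, rfl⟩ ?_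
    rintro _ ⟨x, hx, rfl⟩
    rw [div_le_iff₀' hα]
    exact (add_le_add_left (csInf_le hbdd ⟨x, hx, rfl⟩) ε).trans (h x hx)
  rw [div_le_iff₀' hα] at hle
  linarith

noncomputable def dualUpdateMatrix {n m : ℕ} (c : ℝ) (Rk : Fin m → Matrix (Fin n) (Fin n) ℂ)
    (l : Fin m → ℝ) : Matrix (Fin n) (Fin n) ℂ :=
  ((c : ℂ))⁻¹ • (1 + ∑ k, ((l k : ℝ) : ℂ) • Rk k)

section DualUpdate

variable {n m : ℕ} (c : ℝ) (Rk : Fin m → Matrix (Fin n) (Fin n) ℂ)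

lemma quadForm_dualUpdateMatrix (l : Fin m → ℝ) (x : Fin n → ℂ) :
    quadForm (dualUpdateMatrix c Rk l) x =
      c⁻¹ * (quadForm 1 x + ∑ k, l k * quadForm (Rk k) x) := by
  simp only [dualUpdateMatrix, ← Complex.ofReal_inv, quadForm_real_smul, quadForm_add,
    quadForm_sum]

lemma quadForm_dualUpdateMatrix_nonneg (hc : 0 ≤ c) (hRk : ∀ k, (Rk k).PosSemidef)
    {l : Fin m → ℝ} (hl : ∀ k, 0 ≤ l k) (x : Fin n → ℂ) :
    0 ≤ quadForm (dualUpdateMatrix c Rk l) x := by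
  rw [quadForm_dualUpdateMatrix]
  have hsum : 0 ≤ ∑ k, l k * quadForm (Rk k) x :=
    Finset.sum_nonneg fun k _ => mul_nonneg (hl k) ((hRk k).quadForm_nonneg_s17 x)
  have := PosSemidef.one.quadForm_nonneg_s17 x
  positivity

lemma quadForm_dualUpdateMatrix_smul (α : ℝ) (l : Fin m → ℝ) (x : Fin n → ℂ) :
    quadForm (dualUpdateMatrix c Rk (α • l)) x + (α - 1) * c⁻¹ * quadForm 1 x =
      α * quadForm (dualUpdateMatrix c Rk l) x := by
  simp only [quadForm_dualUpdateMatrix, Pi.smul_apply, smul_eq_mul, mul_assoc, ← Finset.mul_sum]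
  ring

end DualUpdate

section Scalability

open scoped Matrix.Norms.L2Operator

theorem muPlus_dualUpdateMatrix_smul_lt {n m : ℕ} {c α : ℝ} {R : Matrix (Fin n) (Fin n) ℂ}
    {Rk : Fin m → Matrix (Fin n) (Fin n) ℂ} {l : Fin m → ℝ} (hc : 0 < c)
    (hR : R.PosSemidef) (hR0 : R ≠ 0) (hRk : ∀ k, (Rk k).PosSemidef) (hα : 1 < α)
    (hl : ∀ k, 0 ≤ l k) :
    muPlus (dualUpdateMatrix c Rk (α • l)) R < α * muPlus (dualUpdateMatrix c Rk l) R := by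
  have hα' : 0 < α - 1 := sub_pos.mpr hα
  have hR' : 0 < ‖R‖ := norm_pos_iff.mpr hR0
  obtain ⟨x₀, hx₀⟩ := exists_quadForm_pos hR hR0
  refine muPlus_lt_mul_muPlus (ε := (α - 1) * c⁻¹ * ‖R‖⁻¹) (by linarith) (by positivity)
    (exists_quadForm_eq_one hx₀)
    (quadForm_dualUpdateMatrix_nonneg c Rk hc.le hRk fun k => mul_nonneg (by linarith) (hl k))
    fun x hx => ?_
  rw [← quadForm_dualUpdateMatrix_smul]
  gcongr
  exact inv_norm_le_quadForm_one hx

end Scalability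

theorem stmt17 {N m : ℕ} (R : Matrix (Fin N) (Fin N) ℂ)
    (Rk : Fin m → Matrix (Fin N) (Fin N) ℂ)
    (hR : R.PosSemidef) (hR0 : R ≠ 0) (hRk : ∀ k, (Rk k).PosSemidef)
    (γ : ℝ) (hγ : 0 < γ) :
    ∀ (α : ℝ), 1 < α → ∀ l : Fin m → ℝ, (∀ k, 0 ≤ l k) →
      muPlus ((((1 + 1 / γ : ℝ) : ℂ))⁻¹ • (1 + ∑ k, ((α * l k : ℝ) : ℂ) • Rk k)) R <
      α * muPlus ((((1 + 1 / γ : ℝ) : ℂ))⁻¹ • (1 + ∑ k, ((l k : ℝ) : ℂ) • Rk k)) R :=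
  fun _ hα _ hl => muPlus_dualUpdateMatrix_smul_lt (by positivity) hR hR0 hRk hα hl
end
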